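/- There exist absolute constants c > 0 and C > 0 such that the following holds. Let 1 ≤ k ≤ d and let W* ∈ ℝ^{d×k} have nonzero columns w₁,…,w_k and full column rank, with condition number κ := s_max(W*)/s_min(W*); write w̄_i := w_i/‖w_i‖₂. Let U ∈ ℝ^{d×k} have orthonormal columns spanning the column space of W*. Let V ∈ ℝ^{d×k} have orthonormal columns with ‖V Vᵀ − U Uᵀ‖ ≤ δ₂, where δ₂ ≤ c/(κ √k). Let s₁,…,s_k ∈ {−1,1} and û₁,…,û_k ∈ ℝ^k satisfy ‖s_i û_i − Vᵀ w̄_i‖ ≤ δ₃ with δ₃ ≤ c/(κ³ √k). Let r* ∈ ℝ^k and Q₂ := Σ_{i=1}^k r*_i (Vᵀ w̄_i)(Vᵀ w̄_i)ᵀ ≠ 0, and let Q̂₂ ∈ ℝ^{k×k} satisfy ‖Q̂₂ − Q₂‖_F ≤ δ₄ ‖Q₂‖_F with δ₄ ≤ 1/4. Then the least-squares problem min_{r ∈ ℝ^k} ‖Σ_{i=1}^k r_i û_i û_iᵀ − Q̂₂‖_F has a unique minimizer r̂, and for every i ∈ [k]: |r̂_i − r*_i| ≤ C (k³ κ⁸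 δ₃ + κ² k² δ₄) ‖r*‖₂. -/

import Mathlib

open Matrix

/-- Euclidean norm of a finite real vector. -/
noncomputable def l2norm {ι : Type*} [Fintype ι] (x : ι → ℝ) : ℝ :=
  Real.sqrt (∑ i, x i ^ 2)

/-- Spectral (ℓ₂ operator) norm of a real matrix. -/
noncomputable def specNorm {m n : Type*} [Fintype m] [Fintype n] [DecidableEq n]
    (M : Matrix m n ℝ) : ℝ :=
  ‖LinearMap.toContinuousLinearMap (Matrix.toEuclideanLin M)‖

/-- Frobenius norm of a real matrix. -/
noncomputable def frobNorm {m n : Type*} [Fintype m] [Fintype n]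
    (M : Matrix m n ℝ) : ℝ :=
  Real.sqrt (∑ a, ∑ b, M a b ^ 2)

/-- Smallest singular value of a tall matrix (minimum of `‖Wx‖` over unit vectors `x`). -/
noncomputable def sminCol {d k : ℕ} (W : Matrix (Fin d) (Fin k) ℝ) : ℝ :=
  sInf {y | ∃ x : Fin k → ℝ, l2norm x = 1 ∧ y = l2norm (W.mulVec x)}

/-!
Write `v_i = Vᵀ w̄_i` and `A = Vᵀ W̄`, so that `Q₂ = ∑ r*_i v_i v_iᵀ = A diag(r*) Aᵀ`.
Because `V Vᵀ` is `δ₂`-close to the projector `U Uᵀ` onto the column space of `W`, the map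
`x ↦ ∑ x_i v_i = A x` is bounded below by `σ = (9/10) κ⁻¹`, hence `r ↦ A diag(r) Aᵀ` is bounded
below by `σ²` in Frobenius norm. Replacing `v_i` by `±û_i` moves every rank-one term by at most
`3 δ₃`, so the perturbed system `r ↦ ∑ r_i û_i û_iᵀ` stays bounded below by `σ² / 2`. It is
therefore injective, its least-squares solution `r̂` is unique (orthogonal projection onto its
range), and `(σ²/2) ‖r̂ - r*‖ ≤ 2 ‖∑ r*_i û_i û_iᵀ - Q̂₂‖ ≤ 2 (3 δ₃ + δ₄) √k ‖r*‖`.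
-/

theorem Matrix.mulVec_injective_of_rank_eq_card {m n K : Type*} [Fintype n] [Field K]
    {A : Matrix m n K} (hA : A.rank = Fintype.card n) : Function.Injective A.mulVec := by
  have h := LinearMap.finrank_range_add_finrank_ker A.mulVecLin
  rw [← Matrix.rank, hA, Module.finrank_fintype_fun_eq_card, add_eq_left,
    Submodule.finrank_eq_zero] at h
  exact LinearMap.ker_eq_bot.mp h

theorem sum_smul_vecMulVec_eq {ι n : Type*} [Fintype ι] [DecidableEq ι] (v : ι → n → ℝ)
    (r : ι → ℝ) :
    ∑ i, r i • vecMulVec (v i) (v i) = (of v)ᵀ * diagonal r * of v := by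
  ext a b
  rw [Matrix.mul_apply, Matrix.sum_apply]
  simp only [Matrix.smul_apply, vecMulVec_apply, smul_eq_mul, Matrix.mul_diagonal,
    Matrix.transpose_apply, Matrix.of_apply]
  exact Finset.sum_congr rfl fun i _ => by ring

theorem existsUnique_forall_norm_sub_le {E F : Type*} [AddCommGroup E] [Module ℝ E]
    [FiniteDimensional ℝ E] [NormedAddCommGroup F] [InnerProductSpace ℝ F] {T : E →ₗ[ℝ] F}
    (hT : Function.Injective T) (b : F) : ∃! x, ∀ y, ‖T x - b‖ ≤ ‖T y - b‖ := by
  let K := LinearMap.range T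
  obtain ⟨x, hx⟩ := K.starProjection_apply_mem b
  have hpyth : ∀ y, ‖T y - b‖ ^ 2 = ‖T y - T x‖ ^ 2 + ‖T x - b‖ ^ 2 := fun y => by
    have hmem : T y - T x ∈ K :=
      K.sub_mem (LinearMap.mem_range_self T y) (LinearMap.mem_range_self T x)
    have horth : inner ℝ (T y - T x) (b - T x) = 0 := by
      rw [hx] at hmem ⊢
      exact K.inner_right_of_mem_orthogonal hmem (K.sub_starProjection_mem_orthogonal b)
    rw [← sub_add_sub_cancel (T y) (T x) b, norm_add_sq_real, ← neg_sub b, inner_neg_right,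
      horth, neg_zero, mul_zero, add_zero]
  refine ⟨x, fun y => ?_, fun y hy => ?_⟩
  · refine le_of_pow_le_pow_left₀ two_ne_zero (norm_nonneg _) ?_
    rw [hpyth y]
    exact le_add_of_nonneg_left (sq_nonneg _)
  · have hle := pow_le_pow_left₀ (norm_nonneg _) (hy x) 2
    rw [hpyth y] at hle
    have hzero : ‖T y - T x‖ = 0 := by nlinarith [norm_nonneg (T y - T x)]
    exact hT (sub_eq_zero.mp (norm_eq_zero.mp hzero))

variable {ι m n : Type*} [Fintype ι] [Fintype m] [Fintype n]

theorem l2norm_eq_norm_toLp (x : ι → ℝ) : l2norm x = ‖WithLp.toLp 2 x‖ := by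
  simp [l2norm, EuclideanSpace.norm_eq]

theorem l2norm_nonneg (x : ι → ℝ) : 0 ≤ l2norm x := Real.sqrt_nonneg _

theorem l2norm_sq (x : ι → ℝ) : l2norm x ^ 2 = x ⬝ᵥ x := by
  rw [l2norm, Real.sq_sqrt (by positivity)]
  simp [dotProduct, sq]

theorem l2norm_smul (c : ℝ) (x : ι → ℝ) : l2norm (c • x) = |c| * l2norm x := by
  simp [l2norm_eq_norm_toLp, norm_smul]

theorem l2norm_add_le (x y : ι → ℝ) : l2norm (x + y) ≤ l2norm x + l2norm y := by
  simpa [l2norm_eq_norm_toLp] using norm_add_le (WithLp.toLp 2 x) (WithLp.toLp 2 y)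

theorem l2norm_pos {x : ι → ℝ} (hx : x ≠ 0) : 0 < l2norm x := by
  simpa [l2norm_eq_norm_toLp] using hx

theorem abs_le_l2norm (x : ι → ℝ) (i : ι) : |x i| ≤ l2norm x := by
  simpa [l2norm_eq_norm_toLp] using PiLp.norm_apply_le (WithLp.toLp 2 x) i

theorem l2norm_le_l2norm {x y : ι → ℝ} (h : ∀ i, |x i| ≤ |y i|) : l2norm x ≤ l2norm y :=
  Real.sqrt_le_sqrt <| Finset.sum_le_sum fun i _ => sq_le_sq.mpr (h i)

theorem l2norm_single [DecidableEq ι] (i : ι) : l2norm (Pi.single i (1 : ℝ)) = 1 := by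
  simp [l2norm_eq_norm_toLp]

theorem sum_abs_le_sqrt_card_mul_l2norm (x : ι → ℝ) :
    ∑ i, |x i| ≤ √(Fintype.card ι) * l2norm x := by
  rw [l2norm, ← Real.sqrt_mul (by positivity)]
  refine Real.le_sqrt_of_sq_le ?_
  simpa using sq_sum_le_card_mul_sum_sq (s := Finset.univ) (f := fun i => |x i|)

theorem abs_dotProduct_le_l2norm_mul_l2norm (x y : ι → ℝ) : |x ⬝ᵥ y| ≤ l2norm x * l2norm y := by
  simpa [l2norm_eq_norm_toLp, EuclideanSpace.inner_eq_star_dotProduct, dotProduct_comm] using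
    abs_real_inner_le_norm (WithLp.toLp 2 x) (WithLp.toLp 2 y)

theorem l2norm_sq_transpose_mulVec (V : Matrix m n ℝ) (y : m → ℝ) :
    l2norm (Vᵀ *ᵥ y) ^ 2 = y ⬝ᵥ (V * Vᵀ) *ᵥ y := by
  rw [l2norm_sq, Matrix.dotProduct_mulVec, Matrix.mulVec_transpose, Matrix.vecMul_vecMul,
    ← Matrix.dotProduct_mulVec]

section Spectral

variable [DecidableEq n]

theorem specNorm_nonneg (M : Matrix m n ℝ) : 0 ≤ specNorm M := norm_nonneg _

theorem l2norm_mulVec_le_specNorm (M : Matrix m n ℝ) (x : n → ℝ) :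
    l2norm (M *ᵥ x) ≤ specNorm M * l2norm x := by
  simpa [l2norm_eq_norm_toLp, specNorm] using
    (LinearMap.toContinuousLinearMap (Matrix.toEuclideanLin M)).le_opNorm (WithLp.toLp 2 x)

theorem l2norm_col_le_specNorm (M : Matrix m n ℝ) (j : n) :
    l2norm (fun i => M i j) ≤ specNorm M := by
  have h := l2norm_mulVec_le_specNorm M (Pi.single j 1)
  rwa [l2norm_single, mul_one, Matrix.mulVec_single, MulOpposite.op_one, one_smul] at h

theorem abs_dotProduct_mulVec_le_specNorm (B : Matrix n n ℝ) (x : n → ℝ) :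
    |x ⬝ᵥ B *ᵥ x| ≤ specNorm B * l2norm x ^ 2 :=
  calc |x ⬝ᵥ B *ᵥ x| ≤ l2norm x * l2norm (B *ᵥ x) := abs_dotProduct_le_l2norm_mul_l2norm _ _
    _ ≤ l2norm x * (specNorm B * l2norm x) :=
        mul_le_mul_of_nonneg_left (l2norm_mulVec_le_specNorm B x) (l2norm_nonneg x)
    _ = specNorm B * l2norm x ^ 2 := by ring

end Spectral

section OrthonormalColumns

variable [DecidableEq n] {U V : Matrix m n ℝ}

theorem l2norm_mulVec_of_transpose_mul_self (hV : Vᵀ * V = 1) (z : n → ℝ) :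
    l2norm (V *ᵥ z) = l2norm z := by
  have h : l2norm (V *ᵥ z) ^ 2 = l2norm z ^ 2 := by
    rw [l2norm_sq, l2norm_sq, Matrix.dotProduct_mulVec, ← Matrix.mulVec_transpose,
      Matrix.mulVec_mulVec, hV, Matrix.one_mulVec]
  exact (pow_left_inj₀ (l2norm_nonneg _) (l2norm_nonneg _) two_ne_zero).mp h

theorem l2norm_transpose_mulVec_le (hV : Vᵀ * V = 1) (y : m → ℝ) :
    l2norm (Vᵀ *ᵥ y) ≤ l2norm y := by
  have h : l2norm (Vᵀ *ᵥ y) ^ 2 ≤ l2norm y * l2norm (Vᵀ *ᵥ y) := by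
    rw [l2norm_sq_transpose_mulVec, ← Matrix.mulVec_mulVec,
      ← l2norm_mulVec_of_transpose_mul_self hV (Vᵀ *ᵥ y)]
    exact (le_abs_self _).trans (abs_dotProduct_le_l2norm_mul_l2norm _ _)
  nlinarith [l2norm_nonneg (Vᵀ *ᵥ y), l2norm_nonneg y]

theorem one_sub_specNorm_mul_le_l2norm_sq [DecidableEq m] (hU : Uᵀ * U = 1) {y : m → ℝ}
    (hy : y ∈ LinearMap.range U.mulVecLin) :
    (1 - specNorm (V * Vᵀ - U * Uᵀ)) * l2norm y ^ 2 ≤ l2norm (Vᵀ *ᵥ y) ^ 2 := by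
  obtain ⟨z, rfl⟩ := hy
  have hUU : l2norm (Uᵀ *ᵥ U *ᵥ z) = l2norm (U *ᵥ z) := by
    rw [Matrix.mulVec_mulVec, hU, Matrix.one_mulVec, l2norm_mulVec_of_transpose_mul_self hU]
  have hquad := abs_dotProduct_mulVec_le_specNorm (V * Vᵀ - U * Uᵀ) (U *ᵥ z)
  rw [Matrix.sub_mulVec, dotProduct_sub, ← l2norm_sq_transpose_mulVec,
    ← l2norm_sq_transpose_mulVec, hUU] at hquad
  simp only [Matrix.mulVecLin_apply]
  linarith [(abs_le.mp hquad).1]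

end OrthonormalColumns

section ConditionNumber

variable {d k : ℕ}

theorem sminCol_mul_l2norm_le (W : Matrix (Fin d) (Fin k) ℝ) (x : Fin k → ℝ) :
    sminCol W * l2norm x ≤ l2norm (W *ᵥ x) := by
  rcases eq_or_ne x 0 with rfl | hx
  · simp [l2norm]
  have hpos := l2norm_pos hx
  have hbdd : BddBelow {y | ∃ x : Fin k → ℝ, l2norm x = 1 ∧ y = l2norm (W *ᵥ x)} :=
    ⟨0, by rintro _ ⟨_, _, rfl⟩; exact l2norm_nonneg _⟩
  have h := csInf_le hbdd ⟨(l2norm x)⁻¹ • x,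
    by rw [l2norm_smul, abs_inv, abs_of_pos hpos, inv_mul_cancel₀ hpos.ne'], rfl⟩
  rw [Matrix.mulVec_smul, l2norm_smul, abs_inv, abs_of_pos hpos] at h
  rwa [← le_div_iff₀ hpos, div_eq_inv_mul]

theorem sminCol_nonneg (W : Matrix (Fin d) (Fin k) ℝ) : 0 ≤ sminCol W :=
  Real.sInf_nonneg fun _ ⟨_, _, hy⟩ => hy ▸ l2norm_nonneg _

theorem sminCol_pos (hk : 0 < k) {W : Matrix (Fin d) (Fin k) ℝ} (hW : W.rank = k) :
    0 < sminCol W := by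
  have hinj : Function.Injective (Matrix.toEuclideanLin W) := fun x y hxy =>
    WithLp.ofLp_injective 2 <| Matrix.mulVec_injective_of_rank_eq_card (by simpa using hW) <|
      congrArg WithLp.ofLp hxy
  obtain ⟨K, hK, hanti⟩ := (LinearMap.injective_iff_antilipschitz _).mp hinj
  refine (inv_pos.mpr (NNReal.coe_pos.mpr hK)).trans_le (le_csInf ?_ ?_)
  · exact ⟨_, Pi.single ⟨0, hk⟩ 1, l2norm_single _, rfl⟩
  · rintro _ ⟨x, hx, rfl⟩
    have h := hanti.le_mul_dist (WithLp.toLp 2 x) 0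
    rw [dist_zero_right, map_zero, dist_zero_right, ← l2norm_eq_norm_toLp, hx] at h
    rw [inv_le_iff_one_le_mul₀' (NNReal.coe_pos.mpr hK)]
    simpa [l2norm_eq_norm_toLp] using h

theorem sminCol_le_specNorm (hk : 0 < k) (W : Matrix (Fin d) (Fin k) ℝ) :
    sminCol W ≤ specNorm W := by
  simpa [l2norm_single] using (sminCol_mul_l2norm_le W (Pi.single ⟨0, hk⟩ 1)).trans
    (l2norm_mulVec_le_specNorm W (Pi.single ⟨0, hk⟩ 1))

theorem one_le_specNorm_div_sminCol (hk : 0 < k) {W : Matrix (Fin d) (Fin k) ℝ}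
    (hW : W.rank = k) : 1 ≤ specNorm W / sminCol W :=
  (one_le_div (sminCol_pos hk hW)).mpr (sminCol_le_specNorm hk W)

noncomputable def unitCol (W : Matrix (Fin d) (Fin k) ℝ) (j : Fin k) : Fin d → ℝ :=
  fun a => W a j / l2norm fun a' => W a' j

theorem unitCol_eq_smul (W : Matrix (Fin d) (Fin k) ℝ) (j : Fin k) :
    unitCol W j = (l2norm fun a => W a j)⁻¹ • fun a => W a j := by
  ext a; simp [unitCol, div_eq_inv_mul]

theorem l2norm_unitCol {W : Matrix (Fin d) (Fin k) ℝ} {j : Fin k} (hW : (fun a => W a j) ≠ 0) :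
    l2norm (unitCol W j) = 1 := by
  rw [unitCol_eq_smul, l2norm_smul, abs_inv, abs_of_pos (l2norm_pos hW),
    inv_mul_cancel₀ (l2norm_pos hW).ne']

theorem sum_smul_unitCol_eq_mulVec (W : Matrix (Fin d) (Fin k) ℝ) (x : Fin k → ℝ) :
    ∑ j, x j • unitCol W j = W *ᵥ fun j => x j / l2norm fun a => W a j := by
  ext a
  simp only [Finset.sum_apply, Pi.smul_apply, smul_eq_mul, unitCol, Matrix.mulVec, dotProduct]
  exact Finset.sum_congr rfl fun j _ => by ring

theorem sminCol_div_specNorm_mul_le {W : Matrix (Fin d) (Fin k) ℝ}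
    (hW : ∀ j, (fun a => W a j) ≠ 0) (x : Fin k → ℝ) :
    sminCol W / specNorm W * l2norm x ≤ l2norm (∑ j, x j • unitCol W j) := by
  have hz : (specNorm W)⁻¹ * l2norm x ≤ l2norm fun j => x j / l2norm fun a => W a j := by
    rw [← abs_of_nonneg (inv_nonneg.mpr (specNorm_nonneg W)), ← l2norm_smul]
    refine l2norm_le_l2norm fun j => ?_
    rw [Pi.smul_apply, smul_eq_mul, abs_mul, abs_div, mul_comm, div_eq_mul_inv,
      abs_of_pos (l2norm_pos (hW j)), abs_of_nonneg (inv_nonneg.mpr (specNorm_nonneg W))]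
    exact mul_le_mul_of_nonneg_left
      (inv_anti₀ (l2norm_pos (hW j)) (l2norm_col_le_specNorm W j)) (abs_nonneg _)
  calc sminCol W / specNorm W * l2norm x
      = sminCol W * ((specNorm W)⁻¹ * l2norm x) := by ring
    _ ≤ sminCol W * l2norm fun j => x j / l2norm fun a => W a j :=
        mul_le_mul_of_nonneg_left hz (sminCol_nonneg W)
    _ ≤ l2norm (∑ j, x j • unitCol W j) := by
        rw [sum_smul_unitCol_eq_mulVec]; exact sminCol_mul_l2norm_le W _

theorem mul_div_mul_le_l2norm_sum_transpose_mulVec_unitCol {W U V : Matrix (Fin d) (Fin k) ℝ}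
    (hW : ∀ j, (fun a => W a j) ≠ 0) (hU : Uᵀ * U = 1)
    (hUW : LinearMap.range U.mulVecLin = LinearMap.range W.mulVecLin) {τ : ℝ} (hτ : 0 ≤ τ)
    (hτV : τ ^ 2 ≤ 1 - specNorm (V * Vᵀ - U * Uᵀ)) (x : Fin k → ℝ) :
    τ * (sminCol W / specNorm W) * l2norm x ≤ l2norm (∑ j, x j • Vᵀ *ᵥ unitCol W j) := by
  set y := ∑ j, x j • unitCol W j
  have hy : y ∈ LinearMap.range U.mulVecLin := by
    rw [hUW, show y = _ from sum_smul_unitCol_eq_mulVec W x]; exact LinearMap.mem_range_self _ _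
  have hVy : τ * l2norm y ≤ l2norm (Vᵀ *ᵥ y) := by
    refine le_of_pow_le_pow_left₀ two_ne_zero (l2norm_nonneg _) ?_
    rw [mul_pow]
    exact (mul_le_mul_of_nonneg_right hτV (sq_nonneg _)).trans
      (one_sub_specNorm_mul_le_l2norm_sq hU hy)
  calc τ * (sminCol W / specNorm W) * l2norm x = τ * (sminCol W / specNorm W * l2norm x) := by
        ring
    _ ≤ τ * l2norm y := mul_le_mul_of_nonneg_left (sminCol_div_specNorm_mul_le hW x) hτ
    _ ≤ l2norm (∑ j, x j • Vᵀ *ᵥ unitCol W j) := by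
        simpa [y, Matrix.mulVec_sum, Matrix.mulVec_smul] using hVy

end ConditionNumber

section Frobenius

attribute [local instance] Matrix.frobeniusNormedAddCommGroup Matrix.frobeniusNormedSpace

theorem frobNorm_eq_norm (M : Matrix m n ℝ) : frobNorm M = ‖M‖ := by
  simp [Matrix.frobenius_norm_def, frobNorm, Real.sqrt_eq_rpow]

theorem frobNorm_nonneg (M : Matrix m n ℝ) : 0 ≤ frobNorm M := Real.sqrt_nonneg _

theorem frobNorm_pos {M : Matrix m n ℝ} (hM : M ≠ 0) : 0 < frobNorm M := by
  rwa [frobNorm_eq_norm, norm_pos_iff]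

theorem frobNorm_add_le (M N : Matrix m n ℝ) : frobNorm (M + N) ≤ frobNorm M + frobNorm N := by
  simpa only [frobNorm_eq_norm] using norm_add_le M N

theorem frobNorm_transpose (M : Matrix m n ℝ) : frobNorm Mᵀ = frobNorm M := by
  simp only [frobNorm_eq_norm, Matrix.frobenius_norm_transpose]

theorem frobNorm_diagonal [DecidableEq n] (r : n → ℝ) : frobNorm (diagonal r) = l2norm r := by
  rw [frobNorm_eq_norm, Matrix.frobenius_norm_diagonal, l2norm_eq_norm_toLp]

theorem frobNorm_vecMulVec (x : m → ℝ) (y : n → ℝ) :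
    frobNorm (vecMulVec x y) = l2norm x * l2norm y := by
  rw [frobNorm, l2norm, l2norm, ← Real.sqrt_mul (by positivity), Finset.sum_mul_sum]
  simp [vecMulVec_apply, mul_pow]

theorem frobNorm_sum_smul_le {P : ι → Matrix m n ℝ} {ε : ℝ} (hε : 0 ≤ ε)
    (hP : ∀ i, frobNorm (P i) ≤ ε) (r : ι → ℝ) :
    frobNorm (∑ i, r i • P i) ≤ ε * √(Fintype.card ι) * l2norm r := by
  simp only [frobNorm_eq_norm] at hP ⊢
  calc ‖∑ i, r i • P i‖ ≤ ∑ i, |r i| * ε := by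
        refine (norm_sum_le _ _).trans (Finset.sum_le_sum fun i _ => ?_)
        rw [norm_smul, Real.norm_eq_abs]
        exact mul_le_mul_of_nonneg_left (hP i) (abs_nonneg _)
    _ = ε * ∑ i, |r i| := by rw [Finset.mul_sum]; simp [mul_comm]
    _ ≤ ε * √(Fintype.card ι) * l2norm r := by
        rw [mul_assoc]; exact mul_le_mul_of_nonneg_left (sum_abs_le_sqrt_card_mul_l2norm r) hε

theorem frobNorm_sq (M : Matrix m n ℝ) : frobNorm M ^ 2 = ∑ j, l2norm (fun i => M i j) ^ 2 := by
  rw [frobNorm, Real.sq_sqrt (by positivity), Finset.sum_comm]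
  simp [l2norm, Real.sq_sqrt, Finset.sum_nonneg, sq_nonneg]

theorem mul_frobNorm_le_frobNorm_mul {l : Type*} [Fintype l] {A : Matrix l m ℝ} {σ : ℝ}
    (hσ : 0 ≤ σ) (hA : ∀ x, σ * l2norm x ≤ l2norm (A *ᵥ x)) (M : Matrix m n ℝ) :
    σ * frobNorm M ≤ frobNorm (A * M) := by
  have hcol : ∀ j, (fun i => (A * M) i j) = A *ᵥ fun i => M i j := fun j => by
    ext i; simp [Matrix.mul_apply, Matrix.mulVec, dotProduct]
  refine le_of_pow_le_pow_left₀ two_ne_zero (Real.sqrt_nonneg _) ?_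
  rw [mul_pow, frobNorm_sq, frobNorm_sq, Finset.mul_sum]
  refine Finset.sum_le_sum fun j _ => ?_
  rw [hcol, ← mul_pow]
  exact pow_le_pow_left₀ (mul_nonneg hσ (l2norm_nonneg _)) (hA _) 2

theorem frobNorm_vecMulVec_self_sub_le (u v : n → ℝ) :
    frobNorm (vecMulVec u u - vecMulVec v v) ≤ (l2norm u + l2norm v) * l2norm (u - v) := by
  have h : vecMulVec u u - vecMulVec v v = vecMulVec u (u - v) + vecMulVec (u - v) v := by
    rw [vecMulVec_sub, sub_vecMulVec]; abel
  have htri := frobNorm_add_le (vecMulVec u (u - v)) (vecMulVec (u - v) v)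
  rw [frobNorm_vecMulVec, frobNorm_vecMulVec] at htri
  rw [h]
  linarith

theorem frobNorm_vecMulVec_self_sub_le_of_sign {s δ : ℝ} {u v : n → ℝ} (hs : s = 1 ∨ s = -1)
    (hv : l2norm v ≤ 1) (hδ : δ ≤ 1) (h : l2norm (s • u - v) ≤ δ) :
    frobNorm (vecMulVec u u - vecMulVec v v) ≤ 3 * δ := by
  have hsu : vecMulVec (s • u) (s • u) = vecMulVec u u := by
    rcases hs with rfl | rfl <;> simp
  have hnorm : l2norm (s • u) ≤ δ + 1 := by
    simpa using (l2norm_add_le (s • u - v) v).trans (add_le_add h hv)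
  rw [← hsu]
  refine (frobNorm_vecMulVec_self_sub_le _ _).trans ?_
  nlinarith [l2norm_nonneg (s • u - v), l2norm_nonneg v]

theorem sq_mul_l2norm_le_frobNorm_sum_smul_vecMulVec [DecidableEq ι] {v : ι → n → ℝ} {σ : ℝ}
    (hσ : 0 ≤ σ)     (hv : ∀ x : ι → ℝ, σ * l2norm x ≤ l2norm (∑ i, x i • v i)) (r : ι → ℝ) :
    σ ^ 2 * l2norm r ≤ frobNorm (∑ i, r i • vecMulVec (v i) (v i)) := by
  have hA : ∀ x, σ * l2norm x ≤ l2norm ((of v)ᵀ *ᵥ x) := fun x => by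
    rw [Matrix.mulVec_transpose, Matrix.vecMul_eq_sum]; exact hv x
  have hright : σ * l2norm r ≤ frobNorm (diagonal r * of v) := by
    rw [← frobNorm_diagonal, ← frobNorm_transpose (diagonal r * of v), Matrix.transpose_mul,
      Matrix.diagonal_transpose]
    exact mul_frobNorm_le_frobNorm_mul hσ hA _
  rw [sum_smul_vecMulVec_eq, Matrix.mul_assoc, sq, mul_assoc]
  exact (mul_le_mul_of_nonneg_left hright hσ).trans (mul_frobNorm_le_frobNorm_mul hσ hA _)

/-- An isometric copy of `Matrix m n ℝ` in an inner product space: the Frobenius normed group of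
Mathlib carries no inner product, which the least-squares argument needs. -/
noncomputable def Matrix.toFrobeniusLp :
    Matrix m n ℝ →ₗ[ℝ] WithLp 2 (m → EuclideanSpace ℝ n) where
  toFun M := WithLp.toLp 2 fun i => WithLp.toLp 2 (M i)
  map_add' _ _ := rfl
  map_smul' _ _ := rfl

theorem norm_toFrobeniusLp (M : Matrix m n ℝ) : ‖M.toFrobeniusLp‖ = frobNorm M := by
  rw [frobNorm_eq_norm]; rfl

theorem existsUnique_forall_frobNorm_sum_smul_sub_le {P : ι → Matrix m n ℝ} {μ : ℝ} (hμ : 0 < μ)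
    (hP : ∀ r, μ * l2norm r ≤ frobNorm (∑ i, r i • P i)) (Q : Matrix m n ℝ) :
    ∃! rhat : ι → ℝ, ∀ r : ι → ℝ,
      frobNorm ((∑ i, rhat i • P i) - Q) ≤ frobNorm ((∑ i, r i • P i) - Q) := by
  let T := Matrix.toFrobeniusLp ∘ₗ Fintype.linearCombination ℝ P
  have hT : ∀ r Q, ‖T r - Q.toFrobeniusLp‖ = frobNorm ((∑ i, r i • P i) - Q) := fun r Q => by
    rw [← norm_toFrobeniusLp, map_sub, LinearMap.comp_apply, Fintype.linearCombination_apply]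
  have hinj : Function.Injective T := by
    refine (injective_iff_map_eq_zero T).mpr fun r hr => ?_
    have h := hP r
    rw [← sub_zero (∑ i, r i • P i), ← hT, hr, map_zero, sub_zero, norm_zero] at h
    by_contra hne
    exact (mul_pos hμ (l2norm_pos hne)).not_ge h
  simpa only [hT] using existsUnique_forall_norm_sub_le hinj Q.toFrobeniusLp

theorem exists_least_squares_of_perturbation {P P₀ : ι → Matrix m n ℝ} {μ ε η : ℝ} (hμ : 0 < μ)
    (hP₀ : ∀ r, μ * l2norm r ≤ frobNorm (∑ i, r i • P₀ i)) (hε : 0 ≤ ε)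
    (hP : ∀ i, frobNorm (P i - P₀ i) ≤ ε) (hεμ : 2 * (ε * √(Fintype.card ι)) ≤ μ)
    (r₀ : ι → ℝ) (Q : Matrix m n ℝ) (hQ : frobNorm (Q - ∑ i, r₀ i • P₀ i) ≤ η) :
    ∃ rhat : ι → ℝ,
      (∀ r : ι → ℝ, frobNorm ((∑ i, rhat i • P i) - Q) ≤ frobNorm ((∑ i, r i • P i) - Q)) ∧
      (∀ r' : ι → ℝ, (∀ r : ι → ℝ,
        frobNorm ((∑ i, r' i • P i) - Q) ≤ frobNorm ((∑ i, r i • P i) - Q)) → r' = rhat) ∧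
      μ * l2norm (rhat - r₀) ≤ 4 * (ε * √(Fintype.card ι) * l2norm r₀ + η) := by
  have hdiff : ∀ r, frobNorm ((∑ i, r i • P i) - ∑ i, r i • P₀ i) ≤
      ε * √(Fintype.card ι) * l2norm r := fun r => by
    rw [← Finset.sum_sub_distrib]
    simp_rw [← smul_sub]
    exact frobNorm_sum_smul_le hε hP r
  have hlow : ∀ r, μ / 2 * l2norm r ≤ frobNorm (∑ i, r i • P i) := fun r => by
    have h := hdiff r
    have h₀ := hP₀ r
    simp only [frobNorm_eq_norm] at h h₀ ⊢
    nlinarith [norm_sub_norm_le (∑ i, r i • P₀ i) (∑ i, r i • P i), norm_sub_rev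
      (∑ i, r i • P i) (∑ i, r i • P₀ i), l2norm_nonneg r]
  obtain ⟨rhat, hmin, huniq⟩ := existsUnique_forall_frobNorm_sum_smul_sub_le (half_pos hμ) hlow Q
  refine ⟨rhat, hmin, huniq, ?_⟩
  have hest := hlow (rhat - r₀)
  have hdiff₀ := hdiff r₀
  have hmin₀ := hmin r₀
  have hsplit :
      ∑ i, (rhat - r₀) i • P i = ((∑ i, rhat i • P i) - Q) - ((∑ i, r₀ i • P i) - Q) := by
    simp [sub_smul, Finset.sum_sub_distrib]
  rw [hsplit] at hest
  simp only [frobNorm_eq_norm] at hest hdiff₀ hmin₀ hQ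
  have htri := norm_sub_le ((∑ i, rhat i • P i) - Q) ((∑ i, r₀ i • P i) - Q)
  have hres : ‖(∑ i, r₀ i • P i) - Q‖ ≤ ε * √(Fintype.card ι) * l2norm r₀ + η := by
    rw [← sub_add_sub_cancel _ (∑ i, r₀ i • P₀ i), ← neg_sub Q]
    exact (norm_add_le _ _).trans (by rw [norm_neg]; linarith)
  linarith

theorem exists_least_squares_sum_smul_vecMulVec [DecidableEq ι] {v u : ι → n → ℝ} {s : ι → ℝ}
    {σ δ δ' : ℝ} (hσ : 0 < σ) (hframe : ∀ x : ι → ℝ, σ * l2norm x ≤ l2norm (∑ i, x i • v i))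
    (hv : ∀ i, l2norm (v i) ≤ 1) (hs : ∀ i, s i = 1 ∨ s i = -1)
    (hu : ∀ i, l2norm (s i • u i - v i) ≤ δ) (hδ : 0 ≤ δ) (hδ1 : δ ≤ 1)
    (hδσ : 2 * (3 * δ * √(Fintype.card ι)) ≤ σ ^ 2) (r₀ : ι → ℝ) (Q Q' : Matrix n n ℝ)
    (hQ : Q = ∑ i, r₀ i • vecMulVec (v i) (v i)) (hδ' : 0 ≤ δ')
    (hQ' : frobNorm (Q' - Q) ≤ δ' * frobNorm Q) :
    ∃ rhat : ι → ℝ,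
      (∀ r : ι → ℝ, frobNorm ((∑ i, rhat i • vecMulVec (u i) (u i)) - Q') ≤
        frobNorm ((∑ i, r i • vecMulVec (u i) (u i)) - Q')) ∧
      (∀ r' : ι → ℝ, (∀ r : ι → ℝ, frobNorm ((∑ i, r' i • vecMulVec (u i) (u i)) - Q') ≤
        frobNorm ((∑ i, r i • vecMulVec (u i) (u i)) - Q')) → r' = rhat) ∧
      σ ^ 2 * l2norm (rhat - r₀) ≤ 4 * (3 * δ + δ') * √(Fintype.card ι) * l2norm r₀ := by
  have hvv : ∀ i, frobNorm (vecMulVec (v i) (v i)) ≤ 1 := fun i =>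
    (frobNorm_vecMulVec _ _).trans_le (mul_le_one₀ (hv i) (l2norm_nonneg _) (hv i))
  have hQnorm : frobNorm Q ≤ 1 * √(Fintype.card ι) * l2norm r₀ :=
    hQ ▸ frobNorm_sum_smul_le zero_le_one hvv r₀
  obtain ⟨rhat, hmin, huniq, herr⟩ := exists_least_squares_of_perturbation (pow_pos hσ 2)
    (sq_mul_l2norm_le_frobNorm_sum_smul_vecMulVec hσ.le hframe) (by positivity)
    (fun i => frobNorm_vecMulVec_self_sub_le_of_sign (hs i) (hv i) hδ1 (hu i)) hδσ r₀ Q'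
    (hQ ▸ hQ'.trans (mul_le_mul_of_nonneg_left hQnorm hδ'))
  exact ⟨rhat, hmin, huniq, herr.trans_eq (by ring)⟩

end Frobenius

theorem error_le_of_sq_inv_mul_le {κ k δ₃ δ₄ R e : ℝ} (hκ : 1 ≤ κ) (hk : 1 ≤ k) (hδ₃ : 0 ≤ δ₃)
    (hδ₄ : 0 ≤ δ₄) (hR : 0 ≤ R) (h : (9 / 10 * κ⁻¹) ^ 2 * e ≤ 4 * (3 * δ₃ + δ₄) * √k * R) :
    e ≤ 15 * (k ^ 3 * κ ^ 8 * δ₃ + κ ^ 2 * k ^ 2 * δ₄) * R := by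
  have hκ0 : 0 < κ := zero_lt_one.trans_le hκ
  have he : e ≤ 400 / 81 * (κ ^ 2 * √k) * (3 * δ₃ + δ₄) * R := by
    have := mul_le_mul_of_nonneg_left h (by positivity : (0 : ℝ) ≤ 100 / 81 * κ ^ 2)
    rw [← mul_assoc, show 100 / 81 * κ ^ 2 * (9 / 10 * κ⁻¹) ^ 2 = 1 by field_simp; norm_num,
      one_mul] at this
    linarith
  have hsk : √k ≤ k := Real.sqrt_le_left (zero_le_one.trans hk) |>.mpr (by nlinarith)
  have h₃ : κ ^ 2 * √k ≤ k ^ 3 * κ ^ 8 := by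
    rw [mul_comm]
    exact mul_le_mul (hsk.trans (le_self_pow₀ hk (by norm_num)))
      (pow_le_pow_right₀ hκ (by norm_num)) (by positivity) (by positivity)
  have h₄ : κ ^ 2 * √k ≤ κ ^ 2 * k ^ 2 :=
    mul_le_mul_of_nonneg_left (hsk.trans (le_self_pow₀ hk (by norm_num))) (by positivity)
  calc e ≤ 400 / 81 * (κ ^ 2 * √k) * (3 * δ₃ + δ₄) * R := he
    _ = 1200 / 81 * (κ ^ 2 * √k * (δ₃ * R)) + 400 / 81 * (κ ^ 2 * √k * (δ₄ * R)) := by ring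
    _ ≤ 15 * (k ^ 3 * κ ^ 8 * (δ₃ * R)) + 15 * (κ ^ 2 * k ^ 2 * (δ₄ * R)) := by
        gcongr <;> norm_num
    _ = 15 * (k ^ 3 * κ ^ 8 * δ₃ + κ ^ 2 * k ^ 2 * δ₄) * R := by ring

/-- Lemma A.13, `solution_system_2`, of the paper. Robust recovery of
the coefficients `r*` from the approximate quadratic-form linear system
`min_r ‖∑ i, r_i û_i û_iᵀ − Q̂₂‖_F`: the least-squares problem has a unique minimizer `r̂`,
and `|r̂_i − r*_i| ≤ C (k³ κ⁸ δ₃ + κ² k² δ₄) ‖r*‖₂`. -/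
theorem linear_system_recovery_quadratic_form :
    ∃ c C : ℝ, 0 < c ∧ 0 < C ∧
    ∀ (d k : ℕ), 1 ≤ k → k ≤ d →
    ∀ W : Matrix (Fin d) (Fin k) ℝ,
      (∀ i, (fun a => W a i) ≠ 0) → W.rank = k →
    ∀ κ : ℝ, κ = specNorm W / sminCol W →
    ∀ wbar : Fin k → Fin d → ℝ,
      (∀ i, wbar i = fun a => W a i / l2norm fun a' => W a' i) →
    ∀ U : Matrix (Fin d) (Fin k) ℝ, Uᵀ * U = 1 →
      LinearMap.range U.mulVecLin = LinearMap.range W.mulVecLin →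
    ∀ V : Matrix (Fin d) (Fin k) ℝ, Vᵀ * V = 1 →
    ∀ δ₂ δ₃ δ₄ : ℝ,
      specNorm (V * Vᵀ - U * Uᵀ) ≤ δ₂ → δ₂ ≤ c / (κ * Real.sqrt k) →
    ∀ s : Fin k → ℝ, (∀ i, s i = 1 ∨ s i = -1) →
    ∀ uhat : Fin k → Fin k → ℝ,
      (∀ i, l2norm (fun a => s i * uhat i a - Vᵀ.mulVec (wbar i) a) ≤ δ₃) →
      δ₃ ≤ c / (κ ^ 3 * Real.sqrt k) →
    ∀ rstar : Fin k → ℝ,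
    ∀ Q₂ : Matrix (Fin k) (Fin k) ℝ,
      Q₂ = (∑ i, rstar i • vecMulVec (Vᵀ.mulVec (wbar i)) (Vᵀ.mulVec (wbar i))) →
      Q₂ ≠ 0 →
    ∀ Q₂hat : Matrix (Fin k) (Fin k) ℝ,
      frobNorm (Q₂hat - Q₂) ≤ δ₄ * frobNorm Q₂ → δ₄ ≤ 1 / 4 →
    ∃ rhat : Fin k → ℝ,
      (∀ r : Fin k → ℝ,
        frobNorm ((∑ i, rhat i • vecMulVec (uhat i) (uhat i)) - Q₂hat) ≤
          frobNorm ((∑ i, r i • vecMulVec (uhat i) (uhat i)) - Q₂hat)) ∧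
      (∀ r' : Fin k → ℝ,
        (∀ r : Fin k → ℝ,
          frobNorm ((∑ i, r' i • vecMulVec (uhat i) (uhat i)) - Q₂hat) ≤
            frobNorm ((∑ i, r i • vecMulVec (uhat i) (uhat i)) - Q₂hat)) →
        r' = rhat) ∧
      ∀ i, |rhat i - rstar i| ≤
        C * ((k : ℝ) ^ 3 * κ ^ 8 * δ₃ + κ ^ 2 * (k : ℝ) ^ 2 * δ₄) * l2norm rstar := by
  refine ⟨1 / 100, 15, by norm_num, by norm_num, ?_⟩
  intro d k hk _ W hW hWrank κ hκ wbar hwbar U hU hUW V hV δ₂ δ₃ δ₄ hVU hδ₂ s hs uhat huhat hδ₃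
    rstar Q₂ hQ₂ hQ₂0 Q₂hat hQ₂hat _
  obtain rfl : wbar = unitCol W := funext hwbar
  have hκ1 : 1 ≤ κ := hκ ▸ one_le_specNorm_div_sminCol hk hWrank
  have hk1 : (1 : ℝ) ≤ k := by exact_mod_cast hk
  have hsk : 1 ≤ √(k : ℝ) := Real.one_le_sqrt.mpr hk1
  have hδ₂' : δ₂ ≤ 1 / 100 :=
    hδ₂.trans (div_le_self (by norm_num) (one_le_mul_of_one_le_of_one_le hκ1 hsk))
  have hδ₃0 : 0 ≤ δ₃ := (l2norm_nonneg _).trans (huhat ⟨0, hk⟩)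
  have hδ₃1 : δ₃ ≤ 1 := hδ₃.trans <| (div_le_self (by norm_num)
    (one_le_mul_of_one_le_of_one_le (one_le_pow₀ hκ1) hsk)).trans (by norm_num)
  have hδ₃σ : 2 * (3 * δ₃ * √k) ≤ (9 / 10 * κ⁻¹) ^ 2 := by
    have h := (le_div_iff₀ (by positivity)).mp hδ₃
    rw [mul_pow, inv_pow, ← div_eq_mul_inv, le_div_iff₀ (by positivity)]
    nlinarith [mul_le_mul_of_nonneg_left (pow_le_pow_right₀ hκ1 (by norm_num : 2 ≤ 3))
      (by positivity : 0 ≤ δ₃ * √k)]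
  have hδ₄0 : 0 ≤ δ₄ :=
    nonneg_of_mul_nonneg_left ((frobNorm_nonneg _).trans hQ₂hat) (frobNorm_pos hQ₂0)
  have hframe : ∀ x, 9 / 10 * κ⁻¹ * l2norm x ≤ l2norm (∑ j, x j • Vᵀ *ᵥ unitCol W j) := by
    rw [hκ, inv_div]
    exact mul_div_mul_le_l2norm_sum_transpose_mulVec_unitCol hW hU hUW (by norm_num) (by linarith)
  obtain ⟨rhat, hmin, huniq, herr⟩ := exists_least_squares_sum_smul_vecMulVec (by positivity) hframe
    (fun i => (l2norm_transpose_mulVec_le hV _).trans (l2norm_unitCol (hW i)).le) hs huhat hδ₃0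
    hδ₃1 (by simpa using hδ₃σ) rstar Q₂ Q₂hat hQ₂ hδ₄0 hQ₂hat
  simp only [Fintype.card_fin] at herr
  exact ⟨rhat, hmin, huniq, fun i => (abs_le_l2norm (rhat - rstar) i).trans
    (error_le_of_sq_inv_mul_le hκ1 hk1 hδ₃0 hδ₄0 (l2norm_nonneg _) herr)⟩
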